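/- arXiv:1411.5630 — 4 statements merged into one kernel-verified Lean document; each statement's English description precedes it below -/
import Mathlib

section
/- Let C be a finite metric space with metric d and let a : C → ℝ be a nonnegative function. Then there exists a subset R ⊆ C such that: (a) for all distinct v, v' ∈ R, d(v, v') > 4·max(a(v), a(v')); and (b) for every j ∈ C there exists v ∈ R with a(v) ≤ a(j) and d(v, j) ≤ 4·a(j). -/
private lemma representatives_exist_aux {X : Type*} [MetricSpace X] (a : X → ℝ) :
    ∀ n (C : Finset X), C.card ≤ n → (∀ j ∈ C, 0 ≤ a j) →
    ∃ R ⊆ C,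
      (∀ v ∈ R, ∀ v' ∈ R, v ≠ v' → dist v v' > 4 * max (a v) (a v')) ∧
      (∀ j ∈ C, ∃ v ∈ R, a v ≤ a j ∧ dist v j ≤ 4 * a j) := by
  classical
  intro n
  induction n with
  | zero =>
    intro C hcard _
    refine ⟨∅, Finset.empty_subset _, by simp, ?_⟩
    intro j hj
    exact absurd hj (by simp [Finset.card_eq_zero.mp (Nat.le_zero.mp hcard)])
  | succ n ih =>
    intro C hcard hpos
    rcases C.eq_empty_or_nonempty with rfl | hne
    · exact ⟨∅, Finset.empty_subset _, by simp, by simp⟩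
    obtain ⟨j0, hj0C, hj0min⟩ := C.exists_min_image a hne
    set C' := C.filter (fun x => ¬ dist j0 x ≤ 4 * a x) with hC'
    have hC'sub : C' ⊆ C := Finset.filter_subset _ _
    have hj0not : j0 ∉ C' := by
      simp [hC', Finset.mem_filter, hj0C, hpos j0 hj0C,
        mul_nonneg (by norm_num : (0:ℝ) ≤ 4) (hpos j0 hj0C)]
    have hcard' : C'.card ≤ n := by
      have h1 : C'.card < C.card := Finset.card_lt_card ⟨hC'sub, fun h => hj0not (h hj0C)⟩
      omega
    obtain ⟨R', hR'sub, hR'far, hR'cov⟩ := ih C' hcard' (fun j hj => hpos j (hC'sub hj))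
    refine ⟨insert j0 R', ?_, ?_, ?_⟩
    · intro x hx
      rcases Finset.mem_insert.mp hx with rfl | hx
      · exact hj0C
      · exact hC'sub (hR'sub hx)
    · have key : ∀ v ∈ R', dist j0 v > 4 * max (a j0) (a v) := by
        intro v hv
        have hvC' := hR'sub hv
        have hvC := hC'sub hvC'
        have : ¬ dist j0 v ≤ 4 * a v := (Finset.mem_filter.mp hvC').2
        have hmax : max (a j0) (a v) = a v := max_eq_right (hj0min v hvC)
        rw [hmax]; linarith [not_le.mp this]
      intro v hv v' hv' hne'
      rcases Finset.mem_insert.mp hv with rfl | hv2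
      · rcases Finset.mem_insert.mp hv' with rfl | hv'2
        · exact absurd rfl hne'
        · exact key v' hv'2
      · rcases Finset.mem_insert.mp hv' with h | hv'2
        · subst h; rw [dist_comm, max_comm]; exact key v hv2
        · exact hR'far v hv2 v' hv'2 hne'
    · intro j hj
      by_cases hjC' : j ∈ C'
      · obtain ⟨v, hv, h1, h2⟩ := hR'cov j hjC'
        exact ⟨v, Finset.mem_insert_of_mem hv, h1, h2⟩
      · have : dist j0 j ≤ 4 * a j := by
          by_contra h
          exact hjC' (Finset.mem_filter.mpr ⟨hj, h⟩)
        exact ⟨j0, Finset.mem_insert_self _ _, hj0min j hj, this⟩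

/-- Existence of a set of "representatives" `R ⊆ C`: pairwise far apart relative to
their `a`-values, and covering every client `j` by some `v` with `a v ≤ a j` and
`dist v j ≤ 4 * a j`. -/
theorem representatives_exist {X : Type*} [MetricSpace X]
    (C : Finset X) (a : X → ℝ) (ha : ∀ j ∈ C, 0 ≤ a j) :
    ∃ R ⊆ C,
      (∀ v ∈ R, ∀ v' ∈ R, v ≠ v' → dist v v' > 4 * max (a v) (a v')) ∧
      (∀ j ∈ C, ∃ v ∈ R, a v ≤ a j ∧ dist v j ≤ 4 * a j) :=
  representatives_exist_aux a C.card C le_rfl ha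
end

section
/- Let X be a metric space with metric d, let F and C be finite subsets of X, let R be a finite subset of X, and let {U_v}_{v∈R} be a partition of F indexed by R. Let x : F × C → ℝ be nonnegative with Σ_{i∈F} x_{i,j} = 1 for every j ∈ C, and set d_av(j) = Σ_{i∈F} x_{i,j} d(i,j). Suppose that for every v ∈ R, every i ∈ U_v and every j ∈ C, d(i, v) ≤ d(i, j) + 4·d_av(j). Then Σ_{v∈R} Σ_{i∈U_v} (Σ_{j∈C} x_{i,j}) · d(i, v) ≤ 5 · Σ_{i∈F, j∈C} x_{i,j} d(i,j). -/
/-- Total cost of moving all fractional demands to their Voronoi centers is at most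
`5` times the fractional connection cost. -/
theorem total_moving_cost_bound {X : Type*} [MetricSpace X] [DecidableEq X]
    (F C R : Finset X) (U : X → Finset X)
    (hpart : F = R.biUnion U)
    (hdisj : ∀ v ∈ R, ∀ v' ∈ R, v ≠ v' → Disjoint (U v) (U v'))
    (x : X → X → ℝ)
    (hx : ∀ i ∈ F, ∀ j ∈ C, 0 ≤ x i j)
    (hsum : ∀ j ∈ C, ∑ i ∈ F, x i j = 1)
    (hdist : ∀ v ∈ R, ∀ i ∈ U v, ∀ j ∈ C,
      dist i v ≤ dist i j + 4 * ∑ i' ∈ F, x i' j * dist i' j) :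
    ∑ v ∈ R, ∑ i ∈ U v, (∑ j ∈ C, x i j) * dist i v ≤
      5 * ∑ i ∈ F, ∑ j ∈ C, x i j * dist i j := by
  set D : X → ℝ := fun j => ∑ i' ∈ F, x i' j * dist i' j with hD
  have hUF : ∀ v ∈ R, ∀ i ∈ U v, i ∈ F := by
    intro v hv i hi
    rw [hpart]; exact Finset.mem_biUnion.mpr ⟨v, hv, hi⟩
  have step1 : ∑ v ∈ R, ∑ i ∈ U v, (∑ j ∈ C, x i j) * dist i v ≤
      ∑ v ∈ R, ∑ i ∈ U v, ∑ j ∈ C, x i j * (dist i j + 4 * D j) := by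
    refine Finset.sum_le_sum fun v hv => Finset.sum_le_sum fun i hi => ?_
    rw [Finset.sum_mul]
    refine Finset.sum_le_sum fun j hj => ?_
    exact mul_le_mul_of_nonneg_left (hdist v hv i hi j hj) (hx i (hUF v hv i hi) j hj)
  have step2 : ∑ v ∈ R, ∑ i ∈ U v, ∑ j ∈ C, x i j * (dist i j + 4 * D j)
      = ∑ i ∈ F, ∑ j ∈ C, x i j * (dist i j + 4 * D j) := by
    rw [hpart]
    exact (Finset.sum_biUnion (fun v hv v' hv' hne => hdisj v hv v' hv' hne)).symm
  have hDsum : ∑ j ∈ C, D j = ∑ i ∈ F, ∑ j ∈ C, x i j * dist i j := by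
    rw [Finset.sum_comm]
  have step3 : ∑ i ∈ F, ∑ j ∈ C, x i j * (dist i j + 4 * D j)
      = 5 * ∑ i ∈ F, ∑ j ∈ C, x i j * dist i j := by
    have : ∑ i ∈ F, ∑ j ∈ C, x i j * (dist i j + 4 * D j)
        = (∑ i ∈ F, ∑ j ∈ C, x i j * dist i j)
          + ∑ j ∈ C, (∑ i ∈ F, x i j) * (4 * D j) := by
      simp only [mul_add, Finset.sum_add_distrib, Finset.sum_mul]
      rw [Finset.sum_comm (s := F) (t := C) (f := fun i j => x i j * (4 * D j))]
    rw [this]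
    have : ∑ j ∈ C, (∑ i ∈ F, x i j) * (4 * D j) = ∑ j ∈ C, 4 * D j := by
      refine Finset.sum_congr rfl fun j hj => ?_
      rw [hsum j hj, one_mul]
    rw [this, ← Finset.mul_sum, hDsum]
    ring
  calc ∑ v ∈ R, ∑ i ∈ U v, (∑ j ∈ C, x i j) * dist i v
      ≤ ∑ v ∈ R, ∑ i ∈ U v, ∑ j ∈ C, x i j * (dist i j + 4 * D j) := step1
    _ = 5 * ∑ i ∈ F, ∑ j ∈ C, x i j * dist i j := by rw [step2, step3]
end

section
/- Let X be a metric space with metric d, let F, C, R be finite subsets of X, and let x : F × C → ℝ be nonnegative with Σ_{i∈F} x_{i,j} = 1 for every j ∈ C; set d_av(j) = Σ_{i∈F} x_{i,j} d(i,j). Let J be a nonempty proper subset of R and let B ⊆ F satisfy: (i) d(i', R∖J) ≤ d(i', J) for every i' ∈ F∖B; and (ii) d(i, J) ≤ d(i, j) + 4·d_av(j) for every i ∈ B and j ∈ C. Define π(J) = Σ_{j∈C} x_{B,j}·(1 − x_{B,j}) where x_{B,j} = Σ_{i∈B} x_{i,j}, D(B) = Σ_{i∈B, j∈C} x_{i,j}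 d(i,j), and D'(B) = Σ_{i∈B, j∈C} x_{i,j} d_av(j). Then d(J, R∖J) · π(J) ≤ 4·D(B) + 10·D'(B). -/
/-- Minimum distance between two finite sets of points (as the infimum of pairwise
distances). -/
noncomputable def finsetDist {X : Type*} [MetricSpace X] (A B : Finset X) : ℝ :=
  sInf {r : ℝ | ∃ a ∈ A, ∃ b ∈ B, r = dist a b}

lemma finsetDist_le {X : Type*} [MetricSpace X] {A B : Finset X} {a b : X}
    (ha : a ∈ A) (hb : b ∈ B) : finsetDist A B ≤ dist a b := by
  apply csInf_le
  · refine ⟨0, ?_⟩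
    rintro r ⟨a', _, b', _, rfl⟩
    exact dist_nonneg
  · exact ⟨a, ha, b, hb, rfl⟩

lemma finsetDist_exists {X : Type*} [MetricSpace X] {A B : Finset X}
    (hA : A.Nonempty) (hB : B.Nonempty) :
    ∃ a ∈ A, ∃ b ∈ B, finsetDist A B = dist a b := by
  obtain ⟨a0, ha0⟩ := hA
  obtain ⟨b0, hb0⟩ := hB
  have hfin : {r : ℝ | ∃ a ∈ A, ∃ b ∈ B, r = dist a b}.Finite := by
    have hsub : {r : ℝ | ∃ a ∈ A, ∃ b ∈ B, r = dist a b} ⊆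
        ↑((A ×ˢ B).image fun p => dist p.1 p.2) := by
      rintro r ⟨a, ha, b, hb, rfl⟩
      simp only [Finset.coe_image, Set.mem_image, Finset.mem_coe, Finset.mem_product]
      exact ⟨(a, b), ⟨ha, hb⟩, rfl⟩
    exact Set.Finite.subset ((A ×ˢ B).image fun p => dist p.1 p.2).finite_toSet hsub
  have hne : {r : ℝ | ∃ a ∈ A, ∃ b ∈ B, r = dist a b}.Nonempty :=
    ⟨dist a0 b0, a0, ha0, b0, hb0, rfl⟩
  have hmem := hne.csInf_mem hfin
  obtain ⟨a, ha, b, hb, hr⟩ := hmem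
  exact ⟨a, ha, b, hb, hr⟩

/-- For a nonempty proper subset `J ⊆ R` of representatives with Voronoi region `B`,
`d(J, R \ J) * π(J) ≤ 4 D(B) + 10 D'(B)`. -/
theorem dist_mul_pi_le {X : Type*} [MetricSpace X] [DecidableEq X]
    (F C R : Finset X) (x : X → X → ℝ)
    (hx : ∀ i ∈ F, ∀ j ∈ C, 0 ≤ x i j)
    (hsum : ∀ j ∈ C, ∑ i ∈ F, x i j = 1)
    (J : Finset X) (hJR : J ⊆ R) (hJne : J.Nonempty) (hJprop : J ≠ R)
    (B : Finset X) (hBF : B ⊆ F)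
    (h1 : ∀ i' ∈ F \ B, finsetDist {i'} (R \ J) ≤ finsetDist {i'} J)
    (h2 : ∀ i ∈ B, ∀ j ∈ C,
      finsetDist {i} J ≤ dist i j + 4 * ∑ i' ∈ F, x i' j * dist i' j) :
    finsetDist J (R \ J) * (∑ j ∈ C, (∑ i ∈ B, x i j) * (1 - ∑ i ∈ B, x i j)) ≤
      4 * (∑ i ∈ B, ∑ j ∈ C, x i j * dist i j) +
        10 * (∑ i ∈ B, ∑ j ∈ C, x i j * (∑ i' ∈ F, x i' j * dist i' j)) := by
  set dJ := finsetDist J (R \ J) with hdJ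
  have hRJne : (R \ J).Nonempty := by
    rw [Finset.sdiff_nonempty]
    intro h
    exact hJprop (Finset.Subset.antisymm hJR h)
  -- per-client bound
  have key : ∀ j ∈ C,
      dJ * ((∑ i ∈ B, x i j) * (1 - ∑ i ∈ B, x i j)) ≤
        4 * (∑ i ∈ B, x i j * dist i j) +
          10 * ((∑ i ∈ B, x i j) * (∑ i' ∈ F, x i' j * dist i' j)) := by
    intro j hj
    set dav := ∑ i' ∈ F, x i' j * dist i' j with hdav
    set s := ∑ i ∈ B, x i j with hs
    set t := ∑ i' ∈ F \ B, x i' j with ht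
    have hxB : ∀ i ∈ B, 0 ≤ x i j := fun i hi => hx i (hBF hi) j hj
    have hxT : ∀ i' ∈ F \ B, 0 ≤ x i' j := fun i' hi' =>
      hx i' (Finset.mem_sdiff.mp hi').1 j hj
    have hdav0 : 0 ≤ dav :=
      Finset.sum_nonneg fun i hi => mul_nonneg (hx i hi j hj) dist_nonneg
    have hs0 : 0 ≤ s := Finset.sum_nonneg hxB
    have ht0 : 0 ≤ t := Finset.sum_nonneg hxT
    have hst : t + s = 1 := by
      rw [hs, ht, Finset.sum_sdiff hBF]
      exact hsum j hj
    have h1ms : 1 - s = t := by linarith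
    rw [h1ms]
    -- pairwise distance bound
    have pair : ∀ i ∈ B, ∀ i' ∈ F \ B,
        dJ ≤ 4 * dist i j + 8 * dav + 2 * dist i' j := by
      intro i hi i' hi'
      obtain ⟨p, hp, a, haJ, hpa⟩ :=
        finsetDist_exists (Finset.singleton_nonempty i) hJne
      rw [Finset.mem_singleton] at hp
      rw [hp] at hpa
      obtain ⟨q, hq, b, hbRJ, hqb⟩ :=
        finsetDist_exists (Finset.singleton_nonempty i') hRJne
      rw [Finset.mem_singleton] at hq
      rw [hq] at hqb
      have hdJab : dJ ≤ dist a b := finsetDist_le haJ hbRJ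
      have htr1 : dist a b ≤ dist a i + dist i i' + dist i' b := by
        calc dist a b ≤ dist a i' + dist i' b := dist_triangle a i' b
          _ ≤ (dist a i + dist i i') + dist i' b := by
              have := dist_triangle a i i'
              linarith
      have hib : dist i' b = finsetDist {i'} (R \ J) := hqb.symm
      have hiRJ : finsetDist {i'} (R \ J) ≤ finsetDist {i'} J := h1 i' hi'
      have hiJa : finsetDist {i'} J ≤ dist i' a :=
        finsetDist_le (Finset.mem_singleton_self i') haJ
      have hia2 : dist i' a ≤ dist i' i + dist i a := dist_triangle i' i a
      have hiJ : dist i a = finsetDist {i} J := hpa.symm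
      have hiJ2 : finsetDist {i} J ≤ dist i j + 4 * dav := h2 i hi j hj
      have hii' : dist i i' ≤ dist i j + dist i' j := by
        have := dist_triangle i j i'
        rw [dist_comm j i'] at this
        linarith
      have hci : dist i' i = dist i i' := dist_comm i' i
      have hai : dist a i = dist i a := dist_comm a i
      linarith
    -- expand product as double sum
    have e1 : dJ * (s * t) = ∑ i ∈ B, ∑ i' ∈ F \ B, x i j * x i' j * dJ := by
      rw [hs, ht, Finset.sum_mul_sum, Finset.mul_sum]
      congr 1
      ext i
      rw [Finset.mul_sum]
      congr 1
      ext i'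
      ring
    have e2 : ∑ i ∈ B, ∑ i' ∈ F \ B, x i j * x i' j * dJ ≤
        ∑ i ∈ B, ∑ i' ∈ F \ B,
          x i j * x i' j * (4 * dist i j + 8 * dav + 2 * dist i' j) := by
      refine Finset.sum_le_sum fun i hi => Finset.sum_le_sum fun i' hi' => ?_
      exact mul_le_mul_of_nonneg_left (pair i hi i' hi')
        (mul_nonneg (hxB i hi) (hxT i' hi'))
    set u := ∑ i' ∈ F \ B, x i' j * dist i' j with hu
    have hu0 : 0 ≤ u :=
      Finset.sum_nonneg fun i' hi' => mul_nonneg (hxT i' hi') dist_nonneg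
    have hudav : u ≤ dav := by
      rw [hu, hdav]
      refine Finset.sum_le_sum_of_subset_of_nonneg (Finset.sdiff_subset) ?_
      intro i hi _
      exact mul_nonneg (hx i hi j hj) dist_nonneg
    have inner : ∀ i ∈ B, ∑ i' ∈ F \ B,
        x i j * x i' j * (4 * dist i j + 8 * dav + 2 * dist i' j) =
        x i j * (4 * dist i j + 8 * dav) * t + 2 * x i j * u := by
      intro i _
      have ha : x i j * (4 * dist i j + 8 * dav) * t =
          ∑ i' ∈ F \ B, x i j * (4 * dist i j + 8 * dav) * x i' j :=
        Finset.mul_sum _ _ _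
      have hb : 2 * x i j * u =
          ∑ i' ∈ F \ B, 2 * x i j * (x i' j * dist i' j) :=
        Finset.mul_sum _ _ _
      rw [ha, hb, ← Finset.sum_add_distrib]
      refine Finset.sum_congr rfl fun i' _ => ?_
      ring
    have e3 : ∑ i ∈ B, ∑ i' ∈ F \ B,
        x i j * x i' j * (4 * dist i j + 8 * dav + 2 * dist i' j) ≤
        4 * (∑ i ∈ B, x i j * dist i j) + 10 * (s * dav) := by
      rw [Finset.sum_congr rfl inner]
      have hstep : ∑ i ∈ B, (x i j * (4 * dist i j + 8 * dav) * t + 2 * x i j * u) ≤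
          ∑ i ∈ B, (x i j * (4 * dist i j + 8 * dav) + 2 * x i j * dav) := by
        refine Finset.sum_le_sum fun i hi => ?_
        have hA : 0 ≤ x i j * (4 * dist i j + 8 * dav) := by
          have := dist_nonneg (x := i) (y := j)
          have := hxB i hi
          positivity
        have ht1 : t ≤ 1 := by linarith
        have b1 : x i j * (4 * dist i j + 8 * dav) * t ≤
            x i j * (4 * dist i j + 8 * dav) := by nlinarith
        have b2 : 2 * x i j * u ≤ 2 * x i j * dav := by
          have h2x : 0 ≤ 2 * x i j := by linarith [hxB i hi]
          exact mul_le_mul_of_nonneg_left hudav h2x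
        linarith
      refine le_trans hstep ?_
      have ha : 4 * (∑ i ∈ B, x i j * dist i j) =
          ∑ i ∈ B, 4 * (x i j * dist i j) := Finset.mul_sum _ _ _
      have hsd : s * dav = ∑ i ∈ B, x i j * dav := Finset.sum_mul _ _ _
      have hb : 10 * (∑ i ∈ B, x i j * dav) =
          ∑ i ∈ B, 10 * (x i j * dav) := Finset.mul_sum _ _ _
      have : ∑ i ∈ B, (x i j * (4 * dist i j + 8 * dav) + 2 * x i j * dav) =
          4 * (∑ i ∈ B, x i j * dist i j) + 10 * (s * dav) := by
        rw [ha, hsd, hb, ← Finset.sum_add_distrib]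
        refine Finset.sum_congr rfl fun i _ => ?_
        ring
      linarith [this.le, this.ge]
    calc dJ * (s * t) = ∑ i ∈ B, ∑ i' ∈ F \ B, x i j * x i' j * dJ := e1
      _ ≤ _ := e2
      _ ≤ 4 * (∑ i ∈ B, x i j * dist i j) + 10 * (s * dav) := e3
  -- sum over clients
  calc dJ * (∑ j ∈ C, (∑ i ∈ B, x i j) * (1 - ∑ i ∈ B, x i j))
      = ∑ j ∈ C, dJ * ((∑ i ∈ B, x i j) * (1 - ∑ i ∈ B, x i j)) := Finset.mul_sum _ _ _
    _ ≤ ∑ j ∈ C, (4 * (∑ i ∈ B, x i j * dist i j) +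
          10 * ((∑ i ∈ B, x i j) * (∑ i' ∈ F, x i' j * dist i' j))) :=
        Finset.sum_le_sum key
    _ = 4 * (∑ i ∈ B, ∑ j ∈ C, x i j * dist i j) +
        10 * (∑ i ∈ B, ∑ j ∈ C, x i j * (∑ i' ∈ F, x i' j * dist i' j)) := by
        have g1 : ∑ j ∈ C, ∑ i ∈ B, x i j * dist i j =
            ∑ i ∈ B, ∑ j ∈ C, x i j * dist i j := Finset.sum_comm
        have g2 : ∑ j ∈ C, (∑ i ∈ B, x i j) * (∑ i' ∈ F, x i' j * dist i' j) =
            ∑ i ∈ B, ∑ j ∈ C, x i j * (∑ i' ∈ F, x i' j * dist i' j) := by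
          rw [show (∑ j ∈ C, (∑ i ∈ B, x i j) * (∑ i' ∈ F, x i' j * dist i' j)) =
              ∑ j ∈ C, ∑ i ∈ B, x i j * (∑ i' ∈ F, x i' j * dist i' j) from
            Finset.sum_congr rfl fun j _ => Finset.sum_mul _ _ _]
          exact Finset.sum_comm
        have g3 : ∑ j ∈ C, (4 * (∑ i ∈ B, x i j * dist i j) +
            10 * ((∑ i ∈ B, x i j) * (∑ i' ∈ F, x i' j * dist i' j))) =
            4 * (∑ j ∈ C, ∑ i ∈ B, x i j * dist i j) +
            10 * (∑ j ∈ C, (∑ i ∈ B, x i j) * (∑ i' ∈ F, x i' j * dist i' j)) := by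
          rw [Finset.sum_add_distrib, ← Finset.mul_sum, ← Finset.mul_sum]
        rw [g3, g1, g2]
end

section
/- Let 𝒮 be a finite set, z : 𝒮 → ℝ nonnegative, s : 𝒮 → ℝ nonnegative, and z_⊥ ≥ 0. Let ℓ ≥ 1, y > 0 and ℓ₁ be reals with: Σ_{S∈𝒮} z_S + z_⊥ = 1; Σ_{S∈𝒮} z_S·s_S + ℓ₁·z_⊥ ≤ y; and Y := (1 + 1/ℓ)·y ≤ ℓ₁. Then Σ_{S∈𝒮 : s_S < Y} z_S·(Y − s_S) ≥ y/ℓ. -/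
open Classical in
/-- If the configuration weights `z` (together with `z_⊥`) sum to one, the weighted
sizes satisfy `Σ z_S s_S + ℓ₁ z_⊥ ≤ y`, and `Y = (1 + 1/ℓ) y ≤ ℓ₁`, then
`Σ_{S : s_S < Y} z_S (Y - s_S) ≥ y / ℓ`. -/
theorem small_configs_carry_slack {σ : Type*} (𝒮 : Finset σ) (z s : σ → ℝ)
    (hz : ∀ S ∈ 𝒮, 0 ≤ z S) (hs : ∀ S ∈ 𝒮, 0 ≤ s S)
    (zbot : ℝ) (hzbot : 0 ≤ zbot)
    (ℓ y ℓ₁ : ℝ) (hℓ : 1 ≤ ℓ) (hy : 0 < y)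
    (hone : ∑ S ∈ 𝒮, z S + zbot = 1)
    (hsize : ∑ S ∈ 𝒮, z S * s S + ℓ₁ * zbot ≤ y)
    (hY : (1 + 1 / ℓ) * y ≤ ℓ₁) :
    y / ℓ ≤ ∑ S ∈ 𝒮.filter (fun S => s S < (1 + 1 / ℓ) * y),
      z S * ((1 + 1 / ℓ) * y - s S) := by
  have hℓ0 : (0:ℝ) < ℓ := lt_of_lt_of_le one_pos hℓ
  set Y := (1 + 1 / ℓ) * y with hYdef
  -- full sum lower bound
  have hfull : y / ℓ ≤ ∑ S ∈ 𝒮, z S * (Y - s S) := by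
    have h1 : ∑ S ∈ 𝒮, z S * (Y - s S)
        = (∑ S ∈ 𝒮, z S) * Y - ∑ S ∈ 𝒮, z S * s S := by
      rw [Finset.sum_mul, ← Finset.sum_sub_distrib]
      exact Finset.sum_congr rfl fun S _ => by ring
    have hzsum : ∑ S ∈ 𝒮, z S = 1 - zbot := by linarith
    have hbound : ∑ S ∈ 𝒮, z S * s S ≤ y - ℓ₁ * zbot := by linarith
    have hzb : zbot * (ℓ₁ - Y) ≥ 0 :=
      mul_nonneg hzbot (by linarith)
    have hyl : Y - y = y / ℓ := by
      field_simp [hYdef]; rw [hYdef]; linear_combination y * (one_div_mul_cancel hℓ0.ne')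
    rw [h1, hzsum]
    nlinarith
  -- filtered sum ≥ full sum
  have hsplit := Finset.sum_filter_add_sum_filter_not 𝒮
    (fun S => s S < Y) (fun S => z S * (Y - s S))
  have hneg : ∑ S ∈ 𝒮.filter (fun S => ¬ s S < Y), z S * (Y - s S) ≤ 0 := by
    apply Finset.sum_nonpos
    intro S hS
    rw [Finset.mem_filter] at hS
    exact mul_nonpos_of_nonneg_of_nonpos (hz S hS.1) (by linarith [not_lt.mp hS.2])
  linarith
end
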